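/- arXiv:2510.22899 — 4 statements merged into one kernel-verified Lean document; each statement's English description precedes it below -/
import Mathlib

section
/- Let D ≥ 1, σ > 0, v ∈ ℝ^D a unit vector, Φ ∈ ℝ^{D×D} and Θ ∈ ℝ^{D×D}. Let ξ be a standard real Gaussian random variable (mean 0, variance 1) and ε a random vector in ℝ^D whose coordinates are independent standard real Gaussians, with ξ and ε independent. Then the denoising score matching objective J(Θ) = E[ ‖ Φ Θ (ξ v + σ ε) + ε/σ ‖₂² ] is finite and equals ‖ Φ Θ v ‖₂² + ‖ σ Φ Θ + I/σ ‖_F², where ‖·‖_F denotes the Frobenius norm. -/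
open Matrix MeasureTheory ProbabilityTheory

/-! In each coordinate `i`, the residual `ΦΘ(ξv + σε) + ε/σ` is the linear form
`(ΦΘv)ᵢ ξ + ∑ⱼ Mᵢⱼ εⱼ` with `M = σΦΘ + I/σ`, in the `D + 1` independent standard Gaussians
`ξ, ε₁, …, ε_D`. Such a form is centred with variance the sum of the squares of its
coefficients, and summing over `i` gives `‖ΦΘv‖² + ‖M‖_F²`. -/

lemma variance_fun_sum_mul_of_pairwise_indepFun {Ω ι : Type*} [MeasurableSpace Ω]
    {P : Measure Ω} [Fintype ι] {X : ι → Ω → ℝ}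
    (hX : ∀ i, MemLp (X i) 2 P) (hindep : Pairwise fun i j ↦ X i ⟂ᵢ[P] X j) (c : ι → ℝ) :
    Var[fun ω ↦ ∑ i, c i * X i ω; P] = ∑ i, c i ^ 2 * Var[X i; P] := by
  have hsum := IndepFun.variance_sum (s := Finset.univ) (X := fun i ω ↦ c i * X i ω)
    (fun i _ ↦ (hX i).const_mul (c i))
    (fun i _ j _ hij ↦ (hindep hij).comp (measurable_const_mul (c i)) (measurable_const_mul (c j)))
  simp only [Finset.sum_fn] at hsum
  simp only [hsum, variance_const_mul]

lemma integral_sq_sum_mul_of_hasLaw_gaussianReal {Ω ι : Type*} [MeasurableSpace Ω]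
    {P : Measure Ω} [IsProbabilityMeasure P] [Fintype ι] {X : ι → Ω → ℝ}
    (hX : ∀ i, HasLaw (X i) (gaussianReal 0 1) P) (hindep : Pairwise fun i j ↦ X i ⟂ᵢ[P] X j)
    (c : ι → ℝ) :
    Integrable (fun ω ↦ (∑ i, c i * X i ω) ^ 2) P ∧
      ∫ ω, (∑ i, c i * X i ω) ^ 2 ∂P = ∑ i, c i ^ 2 := by
  have hL2 : ∀ i, MemLp (X i) 2 P := fun i ↦ (hX i).hasGaussianLaw.memLp_two
  have hsum : MemLp (fun ω ↦ ∑ i, c i * X i ω) 2 P :=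
    memLp_finsetSum _ fun i _ ↦ (hL2 i).const_mul (c i)
  have hmean : ∫ ω, ∑ i, c i * X i ω ∂P = 0 := by
    rw [integral_finsetSum _ fun i _ ↦ ((hL2 i).integrable one_le_two).const_mul (c i)]
    simp [integral_const_mul, (hX _).integral_eq, integral_id_gaussianReal]
  refine ⟨hsum.integrable_sq, ?_⟩
  rw [← variance_of_integral_eq_zero hsum.aemeasurable hmean,
    variance_fun_sum_mul_of_pairwise_indepFun hL2 hindep]
  simp [(hX _).variance_eq, variance_id_gaussianReal]

lemma pairwise_indepFun_option_elim {Ω ι : Type*} [MeasurableSpace Ω] {P : Measure Ω}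
    {ξ : Ω → ℝ} {ε : Ω → ι → ℝ} (hεindep : iIndepFun (fun i ω ↦ ε ω i) P)
    (hindep : ξ ⟂ᵢ[P] ε) :
    Pairwise fun o o' : Option ι ↦
      o.elim ξ (fun i ω ↦ ε ω i) ⟂ᵢ[P] o'.elim ξ (fun i ω ↦ ε ω i) := by
  have hξε : ∀ i, ξ ⟂ᵢ[P] fun ω ↦ ε ω i := fun i ↦ hindep.comp measurable_id (measurable_pi_apply i)
  rintro (_ | i) (_ | j) hne
  · exact absurd rfl hne
  · exact hξε j
  · exact (hξε i).symm
  · exact hεindep.indepFun fun hij ↦ hne (congrArg some hij)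

lemma mulVec_smul_add_smul_add_smul {R n : Type*} [CommRing R] [Fintype n] [DecidableEq n]
    (A : Matrix n n R) (x a b : R) (v e : n → R) :
    A *ᵥ (x • v + a • e) + b • e = x • (A *ᵥ v) + (a • A + b • 1) *ᵥ e := by
  simp only [mulVec_add, mulVec_smul, add_mulVec, smul_mulVec, one_mulVec]
  abel

theorem stmt2_general (D : ℕ) (σ : ℝ)
    (v : Fin D → ℝ)
    (Φ Θ : Matrix (Fin D) (Fin D) ℝ)
    {Ω : Type*} [MeasurableSpace Ω] (P : Measure Ω) [IsProbabilityMeasure P]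
    (ξ : Ω → ℝ) (ε : Ω → Fin D → ℝ)
    (hξmeas : Measurable ξ) (hεmeas : Measurable ε)
    (hξ : Measure.map ξ P = gaussianReal 0 1)
    (hε : ∀ i, Measure.map (fun ω => ε ω i) P = gaussianReal 0 1)
    (hεindep : iIndepFun (fun i ω => ε ω i) P)
    (hindep : IndepFun ξ ε P) :
    Integrable (fun ω =>
        ∑ i, (((Φ * Θ) *ᵥ (ξ ω • v + σ • ε ω)) i + σ⁻¹ * ε ω i) ^ 2) P ∧
    ∫ ω, (∑ i, (((Φ * Θ) *ᵥ (ξ ω • v + σ • ε ω)) i + σ⁻¹ * ε ω i) ^ 2) ∂P =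
      ∑ i, ((Φ * Θ) *ᵥ v) i ^ 2 +
        ∑ i, ∑ j, (σ • (Φ * Θ) + σ⁻¹ • (1 : Matrix (Fin D) (Fin D) ℝ)) i j ^ 2 := by
  set M := σ • (Φ * Θ) + σ⁻¹ • (1 : Matrix (Fin D) (Fin D) ℝ)
  let X : Option (Fin D) → Ω → ℝ := fun o ↦ o.elim ξ fun i ω ↦ ε ω i
  let c : Fin D → Option (Fin D) → ℝ := fun i o ↦ o.elim (((Φ * Θ) *ᵥ v) i) (M i)
  have hX : ∀ o, HasLaw (X o) (gaussianReal 0 1) P := by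
    rintro (_ | i)
    · exact ⟨hξmeas.aemeasurable, hξ⟩
    · exact ⟨((measurable_pi_apply i).comp hεmeas).aemeasurable, hε i⟩
  have hcoord : ∀ i ω, ((Φ * Θ) *ᵥ (ξ ω • v + σ • ε ω)) i + σ⁻¹ * ε ω i
      = ∑ o, c i o * X o ω := by
    intro i ω
    have hvec := congrFun (mulVec_smul_add_smul_add_smul (Φ * Θ) (ξ ω) σ σ⁻¹ v (ε ω)) i
    simp only [Pi.add_apply, Pi.smul_apply, smul_eq_mul] at hvec
    rw [hvec, Fintype.sum_option, mul_comm]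
    rfl
  have hterm := fun i ↦ integral_sq_sum_mul_of_hasLaw_gaussianReal hX
    (pairwise_indepFun_option_elim hεindep hindep) (c i)
  simp only [hcoord]
  refine ⟨integrable_finsetSum _ fun i _ ↦ (hterm i).1, ?_⟩
  rw [integral_finsetSum _ fun i _ ↦ (hterm i).1, ← Finset.sum_add_distrib]
  exact Finset.sum_congr rfl fun i _ ↦ (hterm i).2.trans (Fintype.sum_option _)

/-- Closed-form evaluation of the denoising score matching objective for a linear network
`Ω = ΦΘ` at a fixed noise level `σ`, on data `ξ v ∼ N(0, v vᵀ)`: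
`E[‖ΦΘ(ξv + σε) + ε/σ‖₂²] = ‖ΦΘv‖₂² + ‖σΦΘ + I/σ‖_F²`. -/
theorem stmt2 (D : ℕ) (hD : 1 ≤ D) (σ : ℝ) (hσ : 0 < σ)
    (v : Fin D → ℝ) (hv : ∑ i, v i ^ 2 = 1)
    (Φ Θ : Matrix (Fin D) (Fin D) ℝ)
    {Ω : Type*} [MeasurableSpace Ω] (P : Measure Ω) [IsProbabilityMeasure P]
    (ξ : Ω → ℝ) (ε : Ω → Fin D → ℝ)
    (hξmeas : Measurable ξ) (hεmeas : Measurable ε)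
    (hξ : Measure.map ξ P = gaussianReal 0 1)
    (hε : ∀ i, Measure.map (fun ω => ε ω i) P = gaussianReal 0 1)
    (hεindep : iIndepFun (fun i ω => ε ω i) P)
    (hindep : IndepFun ξ ε P) :
    Integrable (fun ω =>
        ∑ i, (((Φ * Θ) *ᵥ (ξ ω • v + σ • ε ω)) i + σ⁻¹ * ε ω i) ^ 2) P ∧
    ∫ ω, (∑ i, (((Φ * Θ) *ᵥ (ξ ω • v + σ • ε ω)) i + σ⁻¹ * ε ω i) ^ 2) ∂P =
      ∑ i, ((Φ * Θ) *ᵥ v) i ^ 2 +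
        ∑ i, ∑ j, (σ • (Φ * Θ) + σ⁻¹ • (1 : Matrix (Fin D) (Fin D) ℝ)) i j ^ 2 :=
  stmt2_general D σ v Φ Θ P ξ ε hξmeas hεmeas hξ hε hεindep hindep
end

section
/- Let D ≥ 1, σ > 0, η ∈ ℝ, let S ∈ ℝ^{D×D} be symmetric, and let u ∈ ℝ^D be a unit vector with S u = λ u for some λ ∈ ℝ. Set Ω* = (1/σ²)((u uᵀ)/(σ² + 1) − I) and let (E_t)_{t≥0} satisfy E_0 = −Ω* and E_t = E_{t−1} − 2η S E_{t−1} (u uᵀ + σ² I) for all t ≥ 1. Then for every t ≥ 0, E_t = −[ I − 2η (λ u uᵀ + σ² S) ]^t Ω*. -/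
open Matrix

/-!
Write `P = u uᵀ` and `B = P + σ² I`, so the recursion reads `E_t = E_{t-1} - 2η S E_{t-1} B`.
Because `u` is an eigenvector of the symmetric matrix `S`, we have `S P = P S = λ P`; hence `S`
commutes with `B`, `Ω*` (a combination of `P` and `I`) commutes with `B`, and `S B = λ P + σ² S`.
With these commutations the recursion is solved by `E_t = (I - 2η S B)^t E_0`.
-/

section Recurrence

variable {R A : Type*} [CommRing R] [Ring A] [Algebra R A]

theorem eq_pow_mul_of_succ_eq_sub_smul_mul (c : R) {S B X : A} (hSB : Commute S B)
    (hXB : Commute X B) (E : ℕ → A) (h0 : E 0 = X)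
    (hsucc : ∀ t, E (t + 1) = E t - c • (S * (E t * B))) :
    ∀ t, E t = (1 - c • (S * B)) ^ t * X := by
  set M := 1 - c • (S * B)
  have hSM (t : ℕ) : Commute S (M ^ t) :=
    ((Commute.one_right S).sub_right (((Commute.refl S).mul_right hSB).smul_right c)).pow_right t
  intro t
  induction t with
  | zero => simpa using h0
  | succ t ih =>
    calc E (t + 1) = M ^ t * X - c • (S * M ^ t * (X * B)) := by
          rw [hsucc, ih, mul_assoc, mul_assoc]
      _ = M ^ t * X - c • (M ^ t * (S * B) * X) := by
          rw [(hSM t).eq, hXB.eq]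
          simp only [mul_assoc]
      _ = M ^ t * (1 - c • (S * B)) * X := by
          rw [mul_sub, mul_one, sub_mul, mul_smul_comm, smul_mul_assoc]
      _ = M ^ (t + 1) * X := by rw [pow_succ]

end Recurrence

namespace Matrix

variable {n R : Type*} [Fintype n] [CommRing R]

theorem mul_vecMulVec_self_of_mulVec_eq_smul {S : Matrix n n R} {u : n → R} {lam : R}
    (h : S *ᵥ u = lam • u) : S * vecMulVec u u = lam • vecMulVec u u := by
  rw [mul_vecMulVec, h, smul_vecMulVec]

theorem commute_vecMulVec_self_of_mulVec_eq_smul {S : Matrix n n R} (hS : S.IsSymm)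
    {u : n → R} {lam : R} (h : S *ᵥ u = lam • u) : Commute S (vecMulVec u u) := by
  have hvec : u ᵥ* S = lam • u := by rw [← mulVec_transpose, hS.eq, h]
  rw [Commute, SemiconjBy, mul_vecMulVec_self_of_mulVec_eq_smul h, vecMulVec_mul, hvec,
    vecMulVec_smul]

end Matrix

theorem stmt5_general (D : ℕ) (σ η : ℝ)
    (S : Matrix (Fin D) (Fin D) ℝ) (hS : S.IsSymm)
    (u : Fin D → ℝ)
    (lam : ℝ) (hEig : S *ᵥ u = lam • u)
    (Ωstar : Matrix (Fin D) (Fin D) ℝ)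
    (hΩstar : Ωstar = (σ ^ 2)⁻¹ • ((σ ^ 2 + 1)⁻¹ • vecMulVec u u - (1 : Matrix (Fin D) (Fin D) ℝ)))
    (E : ℕ → Matrix (Fin D) (Fin D) ℝ)
    (hE0 : E 0 = -Ωstar)
    (hrec : ∀ t : ℕ, 1 ≤ t →
      E t = E (t - 1) - (2 * η) • (S *
        (E (t - 1) * (vecMulVec u u + σ ^ 2 • (1 : Matrix (Fin D) (Fin D) ℝ))))) :
    ∀ t : ℕ,
      E t = -(((1 : Matrix (Fin D) (Fin D) ℝ) -
        (2 * η) • (lam • vecMulVec u u + σ ^ 2 • S)) ^ t * Ωstar) := by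
  set P := vecMulVec u u
  have hSP : Commute S P := commute_vecMulVec_self_of_mulVec_eq_smul hS hEig
  have hSB : Commute S (P + σ ^ 2 • 1) := hSP.add_right ((Commute.one_right S).smul_right _)
  have hΩB : Commute (-Ωstar) (P + σ ^ 2 • 1) := by
    have hPB : Commute P (P + σ ^ 2 • 1) :=
      (Commute.refl P).add_right ((Commute.one_right P).smul_right _)
    rw [hΩstar]
    exact ((hPB.smul_left _).sub_left (Commute.one_left _)).smul_left _ |>.neg_left
  have hSB_eq : S * (P + σ ^ 2 • 1) = lam • P + σ ^ 2 • S := by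
    rw [mul_add, mul_vecMulVec_self_of_mulVec_eq_smul hEig, mul_smul_comm, mul_one]
  intro t
  rw [← hSB_eq, ← mul_neg]
  exact eq_pow_mul_of_succ_eq_sub_smul_mul (2 * η) hSB hΩB E hE0
    (fun t ↦ by simpa using hrec (t + 1) (Nat.le_add_left 1 t)) t

/-- Closed-form solution of the expected-error dynamics of linear DSM when the data direction
`u` is a unit eigenvector of the symmetric conditioning matrix `S`:
`E_t = −[I − 2η(λ u uᵀ + σ² S)]^t Ω*`. -/
theorem stmt5 (D : ℕ) (hD : 1 ≤ D) (σ η : ℝ) (hσ : 0 < σ)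
    (S : Matrix (Fin D) (Fin D) ℝ) (hS : S.IsSymm)
    (u : Fin D → ℝ) (hu : ∑ i, u i ^ 2 = 1)
    (lam : ℝ) (hEig : S *ᵥ u = lam • u)
    (Ωstar : Matrix (Fin D) (Fin D) ℝ)
    (hΩstar : Ωstar = (σ ^ 2)⁻¹ • ((σ ^ 2 + 1)⁻¹ • vecMulVec u u - (1 : Matrix (Fin D) (Fin D) ℝ)))
    (E : ℕ → Matrix (Fin D) (Fin D) ℝ)
    (hE0 : E 0 = -Ωstar)
    (hrec : ∀ t : ℕ, 1 ≤ t →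
      E t = E (t - 1) - (2 * η) • (S *
        (E (t - 1) * (vecMulVec u u + σ ^ 2 • (1 : Matrix (Fin D) (Fin D) ℝ))))) :
    ∀ t : ℕ,
      E t = -(((1 : Matrix (Fin D) (Fin D) ℝ) -
        (2 * η) • (lam • vecMulVec u u + σ ^ 2 • S)) ^ t * Ωstar) :=
  stmt5_general D σ η S hS u lam hEig Ωstar hΩstar E hE0 hrec
end

section
/- Let D ≥ 1, σ > 0, v ∈ ℝ^D a unit vector, Φ ∈ ℝ^{D×D}, and Ω* = (1/σ²)((v vᵀ)/(σ² + 1) − I). Let ξ be a standard real Gaussian random variable and ε a random vector in ℝ^D with independent standard Gaussian coordinates, with ξ and ε independent. Define the random vectors q = ξ v + σ ε and p = Φᵀ( Ω* q + ε/σ ). Then E[ q qᵀ ] = v vᵀ + σ² I and E[ p pᵀ ] = (1 / (σ² (σ² + 1))) · Φᵀ v vᵀ Φ. -/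
open Matrix MeasureTheory ProbabilityTheory

/-!
Stack the noise into `Z = (ξ, ε) ∈ ℝ^{1+D}`; its coordinates are pairwise independent standard
Gaussians, so `E[Z Zᵀ] = I`, and any linear image `B Z` has second moment `B Bᵀ`. With the block
matrices `A = [v | σ I]` and `E = [0 | I]` we have `q = A Z` and `ε = E Z`, hence
`E[q qᵀ] = A Aᵀ = v vᵀ + σ² I =: Σ`. For `p = Φᵀ M Z` with `M = Ω* A + σ⁻¹ E`, expanding `M Mᵀ`
with `A Eᵀ = σ I`, `E Eᵀ = I` and the optimality relation `Ω* Σ = -I` collapses it to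
`Ω* + σ⁻² I = v vᵀ / (σ² (σ² + 1))`.
-/

namespace Matrix

lemma replicateCol_mulVec_const {m ι α : Type*} [CommSemiring α] [Unique ι] (v : m → α) (c : α) :
    replicateCol ι v *ᵥ (fun _ => c) = c • v := by
  ext i
  simp [replicateCol, mulVec, dotProduct, mul_comm]

variable {m n : Type*} [Fintype m] [Fintype n] [DecidableEq m]

lemma smul_vecMulVec_sub_one_mul_vecMulVec_add_smul_one {v : m → ℝ} (hv : v ⬝ᵥ v = 1) {s : ℝ}
    (hs : 0 < s) :
    s⁻¹ • ((s + 1)⁻¹ • vecMulVec v v - 1) * (vecMulVec v v + s • 1) = -1 := by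
  have hvv : vecMulVec v v * vecMulVec v v = vecMulVec v v := by
    rw [vecMulVec_mul_vecMulVec, hv, one_smul]
  simp only [Matrix.smul_mul, Matrix.sub_mul, Matrix.mul_add, Matrix.mul_smul, hvv, Matrix.one_mul,
    Matrix.mul_one, smul_sub]
  match_scalars <;> field_simp
  ring

lemma mul_add_smul_mul_transpose {W : Matrix m m ℝ} {A E : Matrix m n ℝ} {s : ℝ} (hs : s ≠ 0)
    (hW : W * (A * Aᵀ) = -1) (hAE : A * Eᵀ = s • 1) (hE : E * Eᵀ = 1) :
    (W * A + s⁻¹ • E) * (W * A + s⁻¹ • E)ᵀ = W + (s ^ 2)⁻¹ • 1 := by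
  have hEA : E * Aᵀ = s • 1 := by
    rw [← transpose_transpose (E * Aᵀ), transpose_mul, transpose_transpose, hAE, transpose_smul,
      transpose_one]
  simp only [transpose_add, transpose_smul, transpose_mul, Matrix.add_mul, Matrix.mul_add,
    Matrix.smul_mul, Matrix.mul_smul, Matrix.mul_assoc, hE]
  rw [← Matrix.mul_assoc A, ← Matrix.mul_assoc W, hW, ← Matrix.mul_assoc E, hEA, hAE]
  simp only [Matrix.smul_mul, Matrix.mul_smul, Matrix.one_mul, Matrix.mul_one, neg_mul]
  match_scalars <;> simp [hs, sq]

end Matrix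

namespace ProbabilityTheory

variable {Ω : Type*} [MeasurableSpace Ω] {P : Measure Ω}

section StandardGaussian

variable {X : Ω → ℝ} (hX : HasLaw X (gaussianReal 0 1) P)
include hX

lemma HasLaw.integral_eq_zero_of_gaussianReal : ∫ ω, X ω ∂P = 0 := by
  rw [hX.integral_eq, integral_id_gaussianReal]

lemma HasLaw.variance_eq_one_of_gaussianReal : Var[X; P] = 1 := by
  rw [hX.variance_eq, variance_id_gaussianReal, NNReal.coe_one]

lemma HasLaw.memLp_two_of_gaussianReal : MemLp X 2 P :=
  have := hX.isProbabilityMeasure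
  memLp_two_of_variance_ne_zero hX.aemeasurable.aestronglyMeasurable
    (by rw [hX.variance_eq_one_of_gaussianReal]; exact one_ne_zero)

lemma HasLaw.integral_sq_eq_one_of_gaussianReal : ∫ ω, X ω ^ 2 ∂P = 1 := by
  rw [← variance_of_integral_eq_zero hX.aemeasurable hX.integral_eq_zero_of_gaussianReal,
    hX.variance_eq_one_of_gaussianReal]

end StandardGaussian

noncomputable def secondMoment {ι : Type*} (Y : Ω → ι → ℝ) (P : Measure Ω) : Matrix ι ι ℝ :=
  Matrix.of fun i j => ∫ ω, Y ω i * Y ω j ∂P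

variable {ι κ : Type*} {Z : Ω → ι → ℝ}

lemma secondMoment_mulVec [Fintype ι] (hZ : ∀ k, MemLp (fun ω => Z ω k) 2 P)
    (A : Matrix κ ι ℝ) :
    secondMoment (fun ω => A *ᵥ Z ω) P = A * secondMoment Z P * Aᵀ := by
  have hint : ∀ k l, Integrable (fun ω => Z ω k * Z ω l) P :=
    fun k l => (hZ k).integrable_mul (hZ l)
  ext i j
  have hexpand : ∀ ω, (A *ᵥ Z ω) i * (A *ᵥ Z ω) j
      = ∑ l, ∑ k, A i k * A j l * (Z ω k * Z ω l) := by
    intro ω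
    rw [Finset.sum_comm]
    simp only [mulVec, dotProduct, Finset.sum_mul_sum]
    exact Finset.sum_congr rfl fun k _ => Finset.sum_congr rfl fun l _ => by ring
  simp only [secondMoment, of_apply, hexpand, mul_apply, transpose_apply]
  rw [integral_finsetSum _ fun l _ => integrable_finsetSum _ fun k _ => (hint k l).const_mul _]
  refine Finset.sum_congr rfl fun l _ => ?_
  rw [integral_finsetSum _ fun k _ => (hint k l).const_mul _, Finset.sum_mul]
  exact Finset.sum_congr rfl fun k _ => by rw [integral_const_mul]; ring

lemma secondMoment_eq_one_of_gaussianReal [DecidableEq ι]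
    (hZ : ∀ k, HasLaw (fun ω => Z ω k) (gaussianReal 0 1) P)
    (hindep : Pairwise fun k l => IndepFun (fun ω => Z ω k) (fun ω => Z ω l) P) :
    secondMoment Z P = 1 := by
  ext k l
  rcases eq_or_ne k l with rfl | hkl
  · simpa [secondMoment, ← sq] using (hZ k).integral_sq_eq_one_of_gaussianReal
  · rw [secondMoment, of_apply, one_apply_ne hkl,
      (hindep hkl).integral_fun_mul_eq_mul_integral (hZ k).aemeasurable.aestronglyMeasurable
        (hZ l).aemeasurable.aestronglyMeasurable, (hZ k).integral_eq_zero_of_gaussianReal,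
      zero_mul]

lemma pairwise_indepFun_sumElim {ξ : Ω → ℝ} {ε : Ω → ι → ℝ}
    (hεindep : iIndepFun (fun i ω => ε ω i) P) (hindep : IndepFun ξ ε P) :
    Pairwise fun k l => IndepFun (fun ω => Sum.elim (fun _ : Unit => ξ ω) (ε ω) k)
      (fun ω => Sum.elim (fun _ : Unit => ξ ω) (ε ω) l) P := by
  rintro (⟨⟩ | i) (⟨⟩ | j) hkl
  · exact absurd rfl hkl
  · exact hindep.comp measurable_id (measurable_pi_apply j)
  · exact (hindep.comp measurable_id (measurable_pi_apply i)).symm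
  · exact hεindep.indepFun fun h => hkl (congrArg Sum.inr h)

end ProbabilityTheory

theorem stmt9_general (D : ℕ) (σ : ℝ) (hσ : 0 < σ)
    (v : Fin D → ℝ) (hv : ∑ i, v i ^ 2 = 1)
    (Φ : Matrix (Fin D) (Fin D) ℝ)
    (Ωstar : Matrix (Fin D) (Fin D) ℝ)
    (hΩstar : Ωstar = (σ ^ 2)⁻¹ • ((σ ^ 2 + 1)⁻¹ • vecMulVec v v - (1 : Matrix (Fin D) (Fin D) ℝ)))
    {Ω : Type*} [MeasurableSpace Ω] (P : Measure Ω)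
    (ξ : Ω → ℝ) (ε : Ω → Fin D → ℝ)
    (hξmeas : Measurable ξ) (hεmeas : Measurable ε)
    (hξ : Measure.map ξ P = gaussianReal 0 1)
    (hε : ∀ i, Measure.map (fun ω => ε ω i) P = gaussianReal 0 1)
    (hεindep : iIndepFun (fun i ω => ε ω i) P)
    (hindep : IndepFun ξ ε P)
    (q : Ω → Fin D → ℝ) (hq : ∀ ω, q ω = ξ ω • v + σ • ε ω)
    (p : Ω → Fin D → ℝ) (hp : ∀ ω, p ω = Φᵀ *ᵥ (Ωstar *ᵥ q ω + σ⁻¹ • ε ω)) :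
    (Matrix.of fun i j : Fin D => ∫ ω, q ω i * q ω j ∂P) =
      vecMulVec v v + σ ^ 2 • (1 : Matrix (Fin D) (Fin D) ℝ) ∧
    (Matrix.of fun i j : Fin D => ∫ ω, p ω i * p ω j ∂P) =
      (σ ^ 2 * (σ ^ 2 + 1))⁻¹ • (Φᵀ * vecMulVec v v * Φ) := by
  let Z : Ω → Unit ⊕ Fin D → ℝ := fun ω => Sum.elim (fun _ => ξ ω) (ε ω)
  let A : Matrix (Fin D) (Unit ⊕ Fin D) ℝ := fromCols (replicateCol Unit v) (σ • 1)
  let E : Matrix (Fin D) (Unit ⊕ Fin D) ℝ := fromCols 0 1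
  have hlaw : ∀ k, HasLaw (fun ω => Z ω k) (gaussianReal 0 1) P := by
    rintro (⟨⟩ | i)
    exacts [⟨hξmeas.aemeasurable, hξ⟩, ⟨((measurable_pi_apply i).comp hεmeas).aemeasurable, hε i⟩]
  have hZL2 k := (hlaw k).memLp_two_of_gaussianReal
  have hZ : secondMoment Z P = 1 :=
    secondMoment_eq_one_of_gaussianReal hlaw (pairwise_indepFun_sumElim hεindep hindep)
  have hqZ : q = fun ω => A *ᵥ Z ω := funext fun ω => by
    simp only [hq, A, Z, fromCols_mulVec_sumElim, replicateCol_mulVec_const, Matrix.smul_mulVec,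
      one_mulVec]
  have hpZ : p = fun ω => (Φᵀ * (Ωstar * A + σ⁻¹ • E)) *ᵥ Z ω := funext fun ω => by
    rw [hp, hqZ, show ε ω = E *ᵥ Z ω by simp [E, Z], mulVec_mulVec, ← Matrix.smul_mulVec,
      ← add_mulVec, mulVec_mulVec]
  have hAA : A * Aᵀ = vecMulVec v v + σ ^ 2 • 1 := by
    simp [A, transpose_fromCols, fromCols_mul_fromRows, vecMulVec_eq Unit, sq, smul_smul]
  have hΩ : Ωstar * (A * Aᵀ) = -1 := by
    rw [hAA, hΩstar]
    exact smul_vecMulVec_sub_one_mul_vecMulVec_add_smul_one (by simpa [dotProduct, sq] using hv)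
      (by positivity)
  have hAE : A * Eᵀ = σ • 1 := by simp [A, E, transpose_fromCols, fromCols_mul_fromRows]
  have hEE : E * Eᵀ = 1 := by simp [E, transpose_fromCols, fromCols_mul_fromRows]
  refine ⟨?_, ?_⟩
  · change secondMoment q P = _
    rw [hqZ, secondMoment_mulVec hZL2, hZ, Matrix.mul_one, hAA]
  · have hres : Ωstar + (σ ^ 2)⁻¹ • 1 = (σ ^ 2 * (σ ^ 2 + 1))⁻¹ • vecMulVec v v := by
      rw [hΩstar, smul_sub, sub_add_cancel, smul_smul, ← mul_inv]
    change secondMoment p P = _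
    rw [hpZ, secondMoment_mulVec hZL2, hZ, Matrix.mul_one, transpose_mul, transpose_transpose,
      Matrix.mul_assoc, ← Matrix.mul_assoc _ _ Φ, mul_add_smul_mul_transpose hσ.ne' hΩ hAE hEE,
      hres, Matrix.smul_mul, Matrix.mul_smul, Matrix.mul_assoc]

/-- Second moments of the per-sample stochastic gradient factors at the optimum of linear DSM:
for `q = ξ v + σ ε` and `p = Φᵀ(Ω* q + ε/σ)` with `Ω* = (1/σ²)((v vᵀ)/(σ²+1) − I)`,
`E[q qᵀ] = v vᵀ + σ² I` and `E[p pᵀ] = (1/(σ²(σ²+1))) Φᵀ v vᵀ Φ`. -/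
theorem stmt9 (D : ℕ) (hD : 1 ≤ D) (σ : ℝ) (hσ : 0 < σ)
    (v : Fin D → ℝ) (hv : ∑ i, v i ^ 2 = 1)
    (Φ : Matrix (Fin D) (Fin D) ℝ)
    (Ωstar : Matrix (Fin D) (Fin D) ℝ)
    (hΩstar : Ωstar = (σ ^ 2)⁻¹ • ((σ ^ 2 + 1)⁻¹ • vecMulVec v v - (1 : Matrix (Fin D) (Fin D) ℝ)))
    {Ω : Type*} [MeasurableSpace Ω] (P : Measure Ω) [IsProbabilityMeasure P]
    (ξ : Ω → ℝ) (ε : Ω → Fin D → ℝ)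
    (hξmeas : Measurable ξ) (hεmeas : Measurable ε)
    (hξ : Measure.map ξ P = gaussianReal 0 1)
    (hε : ∀ i, Measure.map (fun ω => ε ω i) P = gaussianReal 0 1)
    (hεindep : iIndepFun (fun i ω => ε ω i) P)
    (hindep : IndepFun ξ ε P)
    (q : Ω → Fin D → ℝ) (hq : ∀ ω, q ω = ξ ω • v + σ • ε ω)
    (p : Ω → Fin D → ℝ) (hp : ∀ ω, p ω = Φᵀ *ᵥ (Ωstar *ᵥ q ω + σ⁻¹ • ε ω)) :
    (Matrix.of fun i j : Fin D => ∫ ω, q ω i * q ω j ∂P) =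
      vecMulVec v v + σ ^ 2 • (1 : Matrix (Fin D) (Fin D) ℝ) ∧
    (Matrix.of fun i j : Fin D => ∫ ω, p ω i * p ω j ∂P) =
      (σ ^ 2 * (σ ^ 2 + 1))⁻¹ • (Φᵀ * vecMulVec v v * Φ) :=
  stmt9_general D σ hσ v hv Φ Ωstar hΩstar P ξ ε hξmeas hεmeas hξ hε hεindep hindep q hq p hp
end

section
/- Let D ≥ 1 and let G, C ∈ ℝ^{D×D} be symmetric positive semidefinite matrices with spectral decompositions G = U Λ Uᵀ and C = V Σ Vᵀ, where U and V are orthogonal matrices, Λ = diag(λ_1, …, λ_D) with λ_1 ≥ … ≥ λ_D ≥ 0, and Σ = diag(σ_1, …, σ_D) with σ_1 ≥ … ≥ σ_D ≥ 0. Then for every orthogonal matrix W ∈ ℝ^{D×D}: Σ_{i=1}^{D} λ_i σ_{D+1−i} ≤ tr( Wᵀ G W C ) ≤ Σ_{i=1}^{D} λ_i σ_i. Moreover, the minimum is attained at W_min = U J Vᵀ and the maximum at W_max = U Vᵀ, where J is the row-reversed identity (anti-diagonal permutation) matrix. -/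
open Matrix Finset


lemma cnt' (D : ℕ) (p : ℕ → Prop) [DecidablePred p] (a b : ℕ) (hb : b ≤ D)
    (h : ∀ k, k < D → (p k ↔ a ≤ k ∧ k < b)) :
    ∑ i : Fin D, (if p i then (1:ℝ) else 0) = ((b - a : ℕ) : ℝ) := by
  rw [Fin.sum_univ_eq_sum_range (fun k => if p k then (1:ℝ) else 0), Finset.sum_boole]
  rw [show ((range D).filter p) = Ico a b by
    ext x
    simp only [Finset.mem_filter, Finset.mem_range, Finset.mem_Ico]
    constructor
    · rintro ⟨hx, hp⟩; exact (h x hx).1 hp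
    · rintro ⟨ha, hxb⟩; exact ⟨lt_of_lt_of_le hxb hb, (h x (lt_of_lt_of_le hxb hb)).2 ⟨ha, hxb⟩⟩]
  rw [Nat.card_Ico]

lemma telescope (L : ℕ → ℝ) (a D : ℕ) (ha : a ≤ D) :
    ∑ t ∈ Ico a D, (L t - L (t+1)) = L a - L D := by
  rw [Finset.sum_Ico_eq_sum_range]
  have := Finset.sum_range_sub' (fun k => L (a + k)) (D - a)
  simp only [Nat.add_zero] at this
  rw [show (fun k => L (a+k) - L (a+(k+1))) = (fun k => L (a+k) - L (a+k+1)) by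
    funext k; ring_nf, ] at this
  calc ∑ k ∈ range (D - a), (L (a + k) - L (a + k + 1)) = L a - L (a + (D - a)) := this
    _ = L a - L D := by rw [Nat.add_sub_cancel' ha]

lemma layer (L : ℕ → ℝ) (D : ℕ) (hLD : L D = 0) (i : ℕ) (hi : i < D) :
    L i = ∑ t ∈ range D, if i ≤ t then L t - L (t+1) else 0 := by
  rw [← Finset.sum_filter]
  rw [show ((range D).filter fun t => i ≤ t) = Ico i D by
    ext x; simp [Finset.mem_Ico]; omega]
  rw [telescope L i D (le_of_lt hi), hLD, sub_zero]

lemma swap4 {D : ℕ} (X : Fin D → Fin D → ℕ → ℕ → ℝ) :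
    ∑ i : Fin D, ∑ j : Fin D, ∑ t ∈ range D, ∑ s ∈ range D, X i j t s
    = ∑ t ∈ range D, ∑ s ∈ range D, ∑ i : Fin D, ∑ j : Fin D, X i j t s := by
  calc ∑ i : Fin D, ∑ j : Fin D, ∑ t ∈ range D, ∑ s ∈ range D, X i j t s
      = ∑ i : Fin D, ∑ t ∈ range D, ∑ j : Fin D, ∑ s ∈ range D, X i j t s :=
        Finset.sum_congr rfl fun i _ => Finset.sum_comm
    _ = ∑ t ∈ range D, ∑ i : Fin D, ∑ j : Fin D, ∑ s ∈ range D, X i j t s := Finset.sum_comm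
    _ = ∑ t ∈ range D, ∑ i : Fin D, ∑ s ∈ range D, ∑ j : Fin D, X i j t s :=
        Finset.sum_congr rfl fun t _ => Finset.sum_congr rfl fun i _ => Finset.sum_comm
    _ = ∑ t ∈ range D, ∑ s ∈ range D, ∑ i : Fin D, ∑ j : Fin D, X i j t s :=
        Finset.sum_congr rfl fun t _ => Finset.sum_comm

lemma swap3 {D : ℕ} (X : Fin D → ℕ → ℕ → ℝ) :
    ∑ i : Fin D, ∑ t ∈ range D, ∑ s ∈ range D, X i t s
    = ∑ t ∈ range D, ∑ s ∈ range D, ∑ i : Fin D, X i t s := by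
  calc ∑ i : Fin D, ∑ t ∈ range D, ∑ s ∈ range D, X i t s
      = ∑ t ∈ range D, ∑ i : Fin D, ∑ s ∈ range D, X i t s := Finset.sum_comm
    _ = ∑ t ∈ range D, ∑ s ∈ range D, ∑ i : Fin D, X i t s :=
        Finset.sum_congr rfl fun t _ => Finset.sum_comm

lemma key (D : ℕ) (lam sig : Fin D → ℝ)
    (hlam : ∀ i j : Fin D, i ≤ j → lam j ≤ lam i) (hlam0 : ∀ i, 0 ≤ lam i)
    (hsig : ∀ i j : Fin D, i ≤ j → sig j ≤ sig i) (hsig0 : ∀ i, 0 ≤ sig i)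
    (P : Fin D → Fin D → ℝ) (hP0 : ∀ i j, 0 ≤ P i j)
    (hrow : ∀ i, ∑ j, P i j = 1) (hcol : ∀ j, ∑ i, P i j = 1) :
    (∑ i, lam i * sig i.rev) ≤ (∑ i, ∑ j, lam i * sig j * P i j) ∧
    (∑ i, ∑ j, lam i * sig j * P i j) ≤ ∑ i, lam i * sig i := by
  classical
  set L : ℕ → ℝ := fun k => if h : k < D then lam ⟨k, h⟩ else 0 with hLdef
  set Sg : ℕ → ℝ := fun k => if h : k < D then sig ⟨k, h⟩ else 0 with hSgdef
  have hLD : L D = 0 := by simp [hLdef]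
  have hSgD : Sg D = 0 := by simp [hSgdef]
  have hL0 : ∀ k, 0 ≤ L k := by
    intro k; by_cases h : k < D <;> simp [hLdef, h, hlam0]
  have hSg0 : ∀ k, 0 ≤ Sg k := by
    intro k; by_cases h : k < D <;> simp [hSgdef, h, hsig0]
  have hd0 : ∀ t, 0 ≤ L t - L (t+1) := by
    intro t; by_cases h : t + 1 < D
    · have ht : t < D := by omega
      simp only [hLdef, dif_pos h, dif_pos ht]
      have := hlam ⟨t, ht⟩ ⟨t+1, h⟩ (by simp [Fin.le_def])
      linarith
    · have : L (t+1) = 0 := by simp [hLdef, h]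
      rw [this]; simpa using hL0 t
  have he0 : ∀ s, 0 ≤ Sg s - Sg (s+1) := by
    intro s; by_cases h : s + 1 < D
    · have hs : s < D := by omega
      simp only [hSgdef, dif_pos h, dif_pos hs]
      have := hsig ⟨s, hs⟩ ⟨s+1, h⟩ (by simp [Fin.le_def])
      linarith
    · have : Sg (s+1) = 0 := by simp [hSgdef, h]
      rw [this]; simpa using hSg0 s
  have hlamL : ∀ i : Fin D, lam i = ∑ t ∈ range D, if (i:ℕ) ≤ t then L t - L (t+1) else 0 := by
    intro i
    have : lam i = L i := by simp [hLdef, i.isLt]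
    rw [this]; exact layer L D hLD i i.isLt
  have hsigS : ∀ j : Fin D, sig j = ∑ s ∈ range D, if (j:ℕ) ≤ s then Sg s - Sg (s+1) else 0 := by
    intro j
    have : sig j = Sg j := by simp [hSgdef, j.isLt]
    rw [this]; exact layer Sg D hSgD j j.isLt
  -- the three quantities expanded
  have expandT : (∑ i, ∑ j, lam i * sig j * P i j)
      = ∑ t ∈ range D, ∑ s ∈ range D, (L t - L (t+1)) * (Sg s - Sg (s+1)) *
          (∑ i : Fin D, ∑ j : Fin D, if (i:ℕ) ≤ t ∧ (j:ℕ) ≤ s then P i j else 0) := by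
    have step1 : (∑ i, ∑ j, lam i * sig j * P i j)
        = ∑ i : Fin D, ∑ j : Fin D, ∑ t ∈ range D, ∑ s ∈ range D,
            ((if (i:ℕ) ≤ t then L t - L (t+1) else 0) *
             (if (j:ℕ) ≤ s then Sg s - Sg (s+1) else 0) * P i j) := by
      refine Finset.sum_congr rfl fun i _ => Finset.sum_congr rfl fun j _ => ?_
      rw [hlamL i, hsigS j, Finset.sum_mul_sum]
      rw [Finset.sum_mul]
      refine Finset.sum_congr rfl fun t _ => ?_
      rw [Finset.sum_mul]
    rw [step1, swap4]
    refine Finset.sum_congr rfl fun t _ => Finset.sum_congr rfl fun s _ => ?_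
    rw [Finset.mul_sum]
    refine Finset.sum_congr rfl fun i _ => ?_
    rw [Finset.mul_sum]
    refine Finset.sum_congr rfl fun j _ => ?_
    by_cases h1 : (i:ℕ) ≤ t <;> by_cases h2 : (j:ℕ) ≤ s <;> simp [h1, h2] <;> ring
  have expandA : (∑ i, lam i * sig i)
      = ∑ t ∈ range D, ∑ s ∈ range D, (L t - L (t+1)) * (Sg s - Sg (s+1)) *
          (∑ i : Fin D, if (i:ℕ) ≤ t ∧ (i:ℕ) ≤ s then (1:ℝ) else 0) := by
    have step1 : (∑ i, lam i * sig i)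
        = ∑ i : Fin D, ∑ t ∈ range D, ∑ s ∈ range D,
            ((if (i:ℕ) ≤ t then L t - L (t+1) else 0) *
             (if (i:ℕ) ≤ s then Sg s - Sg (s+1) else 0)) := by
      refine Finset.sum_congr rfl fun i _ => ?_
      rw [hlamL i, hsigS i, Finset.sum_mul_sum]
    rw [step1, swap3]
    refine Finset.sum_congr rfl fun t _ => Finset.sum_congr rfl fun s _ => ?_
    rw [Finset.mul_sum]
    refine Finset.sum_congr rfl fun i _ => ?_
    by_cases h1 : (i:ℕ) ≤ t <;> by_cases h2 : (i:ℕ) ≤ s <;> simp [h1, h2] <;> ring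
  have expandB : (∑ i, lam i * sig i.rev)
      = ∑ t ∈ range D, ∑ s ∈ range D, (L t - L (t+1)) * (Sg s - Sg (s+1)) *
          (∑ i : Fin D, if (i:ℕ) ≤ t ∧ ((i.rev : Fin D):ℕ) ≤ s then (1:ℝ) else 0) := by
    have step1 : (∑ i, lam i * sig i.rev)
        = ∑ i : Fin D, ∑ t ∈ range D, ∑ s ∈ range D,
            ((if (i:ℕ) ≤ t then L t - L (t+1) else 0) *
             (if ((i.rev : Fin D):ℕ) ≤ s then Sg s - Sg (s+1) else 0)) := by
      refine Finset.sum_congr rfl fun i _ => ?_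
      rw [hlamL i, hsigS i.rev, Finset.sum_mul_sum]
    rw [step1, swap3]
    refine Finset.sum_congr rfl fun t _ => Finset.sum_congr rfl fun s _ => ?_
    rw [Finset.mul_sum]
    refine Finset.sum_congr rfl fun i _ => ?_
    by_cases h1 : (i:ℕ) ≤ t <;> by_cases h2 : ((i.rev : Fin D):ℕ) ≤ s <;> simp [h1, h2] <;> ring
  -- pointwise: S ≤ N
  have hSN : ∀ t s : ℕ, t < D → s < D →
      (∑ i : Fin D, ∑ j : Fin D, if (i:ℕ) ≤ t ∧ (j:ℕ) ≤ s then P i j else 0)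
      ≤ ∑ i : Fin D, if (i:ℕ) ≤ t ∧ (i:ℕ) ≤ s then (1:ℝ) else 0 := by
    intro t s ht hs
    rcases le_total t s with h | h
    · have hN : (∑ i : Fin D, if (i:ℕ) ≤ t ∧ (i:ℕ) ≤ s then (1:ℝ) else 0)
          = ∑ i : Fin D, if (i:ℕ) ≤ t then (1:ℝ) else 0 := by
        refine Finset.sum_congr rfl fun i _ => ?_
        exact if_congr (by omega) rfl rfl
      rw [hN]
      refine Finset.sum_le_sum fun i _ => ?_
      by_cases hi : (i:ℕ) ≤ t
      · rw [if_pos hi]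
        calc ∑ j : Fin D, (if (i:ℕ) ≤ t ∧ (j:ℕ) ≤ s then P i j else 0)
            = ∑ j : Fin D, (if (j:ℕ) ≤ s then P i j else 0) :=
              Finset.sum_congr rfl fun j _ => if_congr (by omega) rfl rfl
          _ ≤ ∑ j, P i j := Finset.sum_le_sum fun j _ => by
              by_cases hj : (j:ℕ) ≤ s <;> simp [hj, hP0]
          _ = 1 := hrow i
      · simp [hi]
    · have hN : (∑ i : Fin D, if (i:ℕ) ≤ t ∧ (i:ℕ) ≤ s then (1:ℝ) else 0)
          = ∑ j : Fin D, if (j:ℕ) ≤ s then (1:ℝ) else 0 := by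
        refine Finset.sum_congr rfl fun i _ => ?_
        exact if_congr (by omega) rfl rfl
      rw [hN, Finset.sum_comm]
      refine Finset.sum_le_sum fun j _ => ?_
      by_cases hj : (j:ℕ) ≤ s
      · rw [if_pos hj]
        calc ∑ i : Fin D, (if (i:ℕ) ≤ t ∧ (j:ℕ) ≤ s then P i j else 0)
            = ∑ i : Fin D, (if (i:ℕ) ≤ t then P i j else 0) :=
              Finset.sum_congr rfl fun i _ => if_congr (by omega) rfl rfl
          _ ≤ ∑ i, P i j := Finset.sum_le_sum fun i _ => by
              by_cases hi : (i:ℕ) ≤ t <;> simp [hi, hP0]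
          _ = 1 := hcol j
      · simp [hj]
  -- pointwise: R ≤ S
  have hRS : ∀ t s : ℕ, t < D → s < D →
      (∑ i : Fin D, if (i:ℕ) ≤ t ∧ ((i.rev : Fin D):ℕ) ≤ s then (1:ℝ) else 0)
      ≤ ∑ i : Fin D, ∑ j : Fin D, if (i:ℕ) ≤ t ∧ (j:ℕ) ≤ s then P i j else 0 := by
    intro t s ht hs
    set m : ℕ := D - 1 - s with hm
    have hR : (∑ i : Fin D, if (i:ℕ) ≤ t ∧ ((i.rev : Fin D):ℕ) ≤ s then (1:ℝ) else 0)
        = ((t + 1 - m : ℕ) : ℝ) := by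
      calc (∑ i : Fin D, if (i:ℕ) ≤ t ∧ ((i.rev : Fin D):ℕ) ≤ s then (1:ℝ) else 0)
          = ∑ i : Fin D, (if m ≤ (i:ℕ) ∧ (i:ℕ) < t + 1 then (1:ℝ) else 0) := by
            refine Finset.sum_congr rfl fun i _ => ?_
            have hi := i.isLt
            rw [Fin.val_rev]
            exact if_congr (by omega) rfl rfl
        _ = ((t + 1 - m : ℕ) : ℝ) :=
            cnt' D (fun k => m ≤ k ∧ k < t + 1) m (t+1) (by omega) (fun k _ => Iff.rfl)
    rw [hR]
    by_cases hmt : t + 1 ≤ m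
    · have : (t + 1 - m : ℕ) = 0 := by omega
      rw [this, Nat.cast_zero]
      refine Finset.sum_nonneg fun i _ => Finset.sum_nonneg fun j _ => ?_
      by_cases h : (i:ℕ) ≤ t ∧ (j:ℕ) ≤ s <;> simp [h, hP0]
    · -- m ≤ t
      have hSlow : ((t+1 : ℕ) : ℝ) - ((D - (s+1) : ℕ) : ℝ)
          ≤ ∑ i : Fin D, ∑ j : Fin D, if (i:ℕ) ≤ t ∧ (j:ℕ) ≤ s then P i j else 0 := by
        have inner_eq : ∀ i : Fin D,
            (∑ j : Fin D, if (i:ℕ) ≤ t ∧ (j:ℕ) ≤ s then P i j else 0)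
            = if (i:ℕ) ≤ t then (1 - ∑ j : Fin D, if s < (j:ℕ) then P i j else 0) else 0 := by
          intro i
          by_cases hi : (i:ℕ) ≤ t
          · simp only [hi, true_and, if_true]
            have hterm : ∀ j : Fin D, (if (j:ℕ) ≤ s then P i j else 0)
                = P i j - (if s < (j:ℕ) then P i j else 0) := by
              intro j
              by_cases hj : (j:ℕ) ≤ s
              · simp [hj, not_lt.mpr hj]
              · simp [hj, not_le.mp hj]
            rw [Finset.sum_congr rfl (fun j _ => hterm j), Finset.sum_sub_distrib, hrow]
          · simp [hi]
        have csum : (∑ i : Fin D, ∑ j : Fin D, if s < (j:ℕ) then P i j else 0)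
            = ((D - (s+1) : ℕ) : ℝ) := by
          rw [Finset.sum_comm]
          calc (∑ j : Fin D, ∑ i : Fin D, if s < (j:ℕ) then P i j else 0)
              = ∑ j : Fin D, (if s < (j:ℕ) then (1:ℝ) else 0) := by
                refine Finset.sum_congr rfl fun j _ => ?_
                by_cases hj : s < (j:ℕ)
                · simp only [hj, if_true]; exact hcol j
                · simp [hj]
            _ = ((D - (s+1) : ℕ) : ℝ) :=
                cnt' D (fun k => s < k) (s+1) D le_rfl (fun k hk => by omega)
        have cnt_t : (∑ i : Fin D, if (i:ℕ) ≤ t then (1:ℝ) else 0) = ((t+1 : ℕ) : ℝ) := by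
          have := cnt' D (fun k => k ≤ t) 0 (t+1) (by omega) (fun k hk => by omega)
          simpa using this
        have c_nonneg : ∀ i : Fin D, 0 ≤ ∑ j : Fin D, (if s < (j:ℕ) then P i j else 0) :=
          fun i => Finset.sum_nonneg fun j _ => by
            by_cases hj : s < (j:ℕ) <;> simp [hj, hP0]
        calc ((t+1 : ℕ) : ℝ) - ((D - (s+1) : ℕ) : ℝ)
            = (∑ i : Fin D, if (i:ℕ) ≤ t then (1:ℝ) else 0)
              - ∑ i : Fin D, ∑ j : Fin D, (if s < (j:ℕ) then P i j else 0) := by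
              rw [csum, cnt_t]
          _ ≤ ∑ i : Fin D, ((if (i:ℕ) ≤ t then (1:ℝ) else 0)
              - if (i:ℕ) ≤ t then (∑ j : Fin D, if s < (j:ℕ) then P i j else 0) else 0) := by
              rw [Finset.sum_sub_distrib]
              refine sub_le_sub_left (Finset.sum_le_sum fun i _ => ?_) _
              by_cases hi : (i:ℕ) ≤ t
              · simp [hi]
              · simp [hi, c_nonneg i]
          _ = ∑ i : Fin D, ∑ j : Fin D, (if (i:ℕ) ≤ t ∧ (j:ℕ) ≤ s then P i j else 0) := by
              refine Finset.sum_congr rfl fun i _ => ?_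
              rw [inner_eq i]
              by_cases hi : (i:ℕ) ≤ t <;> simp [hi]
      have hcast : ((t + 1 - m : ℕ) : ℝ) = ((t+1 : ℕ) : ℝ) - ((D - (s+1) : ℕ) : ℝ) := by
        have h1 : D - (s+1) = m := by omega
        rw [h1, Nat.cast_sub (by omega)]
      rw [hcast]
      exact hSlow
  constructor
  · rw [expandB, expandT]
    refine Finset.sum_le_sum fun t ht => Finset.sum_le_sum fun s hs => ?_
    exact mul_le_mul_of_nonneg_left (hRS t s (mem_range.mp ht) (mem_range.mp hs))
      (mul_nonneg (hd0 t) (he0 s))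
  · rw [expandT, expandA]
    refine Finset.sum_le_sum fun t ht => Finset.sum_le_sum fun s hs => ?_
    exact mul_le_mul_of_nonneg_left (hSN t s (mem_range.mp ht) (mem_range.mp hs))
      (mul_nonneg (hd0 t) (he0 s))


lemma reduce (D : ℕ) (U V W : Matrix (Fin D) (Fin D) ℝ) (a b : Fin D → ℝ) :
    Matrix.trace (Wᵀ * (U * Matrix.diagonal a * Uᵀ) * W * (V * Matrix.diagonal b * Vᵀ))
    = Matrix.trace ((Uᵀ * W * V)ᵀ * Matrix.diagonal a * (Uᵀ * W * V) * Matrix.diagonal b) := by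
  have h1 : Wᵀ * (U * Matrix.diagonal a * Uᵀ) * W * (V * Matrix.diagonal b * Vᵀ)
      = (Wᵀ * U * Matrix.diagonal a * Uᵀ * W * V * Matrix.diagonal b) * Vᵀ := by
    simp only [Matrix.mul_assoc]
  have h2 : (Uᵀ * W * V)ᵀ * Matrix.diagonal a * (Uᵀ * W * V) * Matrix.diagonal b
      = Vᵀ * (Wᵀ * U * Matrix.diagonal a * Uᵀ * W * V * Matrix.diagonal b) := by
    simp only [Matrix.transpose_mul, Matrix.transpose_transpose, Matrix.mul_assoc]
  rw [h1, Matrix.trace_mul_comm, h2]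

lemma trace_form (D : ℕ) (a b : Fin D → ℝ) (M : Matrix (Fin D) (Fin D) ℝ) :
    Matrix.trace (Mᵀ * Matrix.diagonal a * M * Matrix.diagonal b)
    = ∑ i, ∑ j, a i * b j * (M i j)^2 := by
  rw [Matrix.trace]
  have entry : ∀ y : Fin D, (Mᵀ * Matrix.diagonal a * M * Matrix.diagonal b).diag y
      = ∑ k, a k * b y * (M k y)^2 := by
    intro y
    rw [Matrix.diag_apply, Matrix.mul_diagonal, Matrix.mul_apply, Finset.sum_mul]
    refine Finset.sum_congr rfl fun k _ => ?_
    rw [Matrix.mul_diagonal, Matrix.transpose_apply]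
    ring
  rw [Finset.sum_congr rfl fun y _ => entry y, Finset.sum_comm]

/-- Extreme alignment (Theorem 2): for symmetric PSD `G = U Λ Uᵀ` and `C = V Σ Vᵀ` with
nonincreasing eigenvalues, every orthogonal `W` satisfies
`Σ_i λ_i σ_{D+1−i} ≤ tr(Wᵀ G W C) ≤ Σ_i λ_i σ_i`, the minimum being attained at
`W_min = U J Vᵀ` and the maximum at `W_max = U Vᵀ`, where `J` is the reversal permutation. -/
theorem stmt14 (D : ℕ) (hD : 1 ≤ D)
    (G C U V : Matrix (Fin D) (Fin D) ℝ)
    (lam sig : Fin D → ℝ)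
    (hU : Uᵀ * U = 1) (hV : Vᵀ * V = 1)
    (hG : G = U * Matrix.diagonal lam * Uᵀ)
    (hC : C = V * Matrix.diagonal sig * Vᵀ)
    (hlam : ∀ i j : Fin D, i ≤ j → lam j ≤ lam i) (hlam0 : ∀ i, 0 ≤ lam i)
    (hsig : ∀ i j : Fin D, i ≤ j → sig j ≤ sig i) (hsig0 : ∀ i, 0 ≤ sig i)
    (J : Matrix (Fin D) (Fin D) ℝ)
    (hJ : J = Matrix.of fun i j : Fin D => if j = i.rev then (1 : ℝ) else 0) :
    (∀ W : Matrix (Fin D) (Fin D) ℝ, Wᵀ * W = 1 →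
      (∑ i, lam i * sig i.rev) ≤ Matrix.trace (Wᵀ * G * W * C) ∧
      Matrix.trace (Wᵀ * G * W * C) ≤ ∑ i, lam i * sig i) ∧
    Matrix.trace ((U * J * Vᵀ)ᵀ * G * (U * J * Vᵀ) * C) = ∑ i, lam i * sig i.rev ∧
    Matrix.trace ((U * Vᵀ)ᵀ * G * (U * Vᵀ) * C) = ∑ i, lam i * sig i := by
  classical
  have hUU : U * Uᵀ = 1 := mul_eq_one_comm.mp hU
  refine ⟨?_, ?_, ?_⟩
  · intro W hW
    have hMtM : (Uᵀ * W * V)ᵀ * (Uᵀ * W * V) = 1 := by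
      have e1 : (Uᵀ * W * V)ᵀ * (Uᵀ * W * V) = Vᵀ * (Wᵀ * (U * (Uᵀ * (W * V)))) := by
        simp only [Matrix.transpose_mul, Matrix.transpose_transpose, Matrix.mul_assoc]
      rw [e1, ← Matrix.mul_assoc U Uᵀ, hUU, Matrix.one_mul,
        ← Matrix.mul_assoc Wᵀ W, hW, Matrix.one_mul, hV]
    have hMMt : (Uᵀ * W * V) * (Uᵀ * W * V)ᵀ = 1 := mul_eq_one_comm.mp hMtM
    have hrowP : ∀ i, ∑ j, ((Uᵀ * W * V) i j)^2 = 1 := by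
      intro i
      have h := congrFun (congrFun hMMt i) i
      rw [Matrix.mul_apply] at h
      simp only [Matrix.transpose_apply, Matrix.one_apply_eq] at h
      calc ∑ j, ((Uᵀ * W * V) i j)^2 = ∑ j, (Uᵀ * W * V) i j * (Uᵀ * W * V) i j := by
            refine Finset.sum_congr rfl fun j _ => by ring
        _ = 1 := h
    have hcolP : ∀ j, ∑ i, ((Uᵀ * W * V) i j)^2 = 1 := by
      intro j
      have h := congrFun (congrFun hMtM j) j
      rw [Matrix.mul_apply] at h
      simp only [Matrix.transpose_apply, Matrix.one_apply_eq] at h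
      calc ∑ i, ((Uᵀ * W * V) i j)^2 = ∑ i, (Uᵀ * W * V) i j * (Uᵀ * W * V) i j := by
            refine Finset.sum_congr rfl fun i _ => by ring
        _ = 1 := h
    have htr : Matrix.trace (Wᵀ * G * W * C)
        = ∑ i, ∑ j, lam i * sig j * ((Uᵀ * W * V) i j)^2 := by
      rw [hG, hC, reduce, trace_form]
    rw [htr]
    exact key D lam sig hlam hlam0 hsig hsig0 (fun i j => ((Uᵀ * W * V) i j)^2)
      (fun i j => sq_nonneg _) hrowP hcolP
  · have hM : Uᵀ * (U * J * Vᵀ) * V = J := by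
      rw [show Uᵀ * (U * J * Vᵀ) * V = (Uᵀ * U) * (J * (Vᵀ * V)) by
        simp only [Matrix.mul_assoc], hU, hV, Matrix.one_mul, Matrix.mul_one]
    rw [hG, hC, reduce, hM, trace_form]
    refine Finset.sum_congr rfl fun i _ => ?_
    have hterm : ∀ j : Fin D, lam i * sig j * (J i j)^2
        = if j = i.rev then lam i * sig j else 0 := by
      intro j
      rw [hJ]
      by_cases h : j = i.rev <;> simp [h]
    rw [Finset.sum_congr rfl fun j _ => hterm j,
      Finset.sum_ite_eq' Finset.univ i.rev (fun j => lam i * sig j)]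
    simp
  · have hM : Uᵀ * (U * Vᵀ) * V = 1 := by
      rw [show Uᵀ * (U * Vᵀ) * V = (Uᵀ * U) * (Vᵀ * V) by
        simp only [Matrix.mul_assoc], hU, hV, Matrix.one_mul]
    rw [hG, hC, reduce, hM, trace_form]
    refine Finset.sum_congr rfl fun i _ => ?_
    have hterm : ∀ j : Fin D, lam i * sig j * (((1 : Matrix (Fin D) (Fin D) ℝ)) i j)^2
        = if i = j then lam i * sig j else 0 := by
      intro j
      by_cases h : i = j <;> simp [Matrix.one_apply, h]
    rw [Finset.sum_congr rfl fun j _ => hterm j,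
      Finset.sum_ite_eq Finset.univ i (fun j => lam i * sig j)]
    simp
end
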